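/- Let M = [δ_{ij} λ_i + a_{ij}] be a P-matrix and let p ∈ {1,…,n−1}. There exists a vector x* = (x_1*,…,x_p*,0,…,0) ∈ ℝ^n with x_i* > 0 for i = 1,…,p such that (M x*)_i = b_i for i = 1,…,p and (M x*)_q ≥ b_q for q = p+1,…,n (i.e., x* determines a saturated equilibrium of the system whose last n−p components vanish) if and only if R_i^p > 0 for all i = 1,…,p and R_q^{p+1,q} ≤ 0 for all q = p+1,…,n. In this case x_i* = R_i^p / R_0^p for i = 1,…,p, and b_q ≤ Σ_{j=1}^p a_{qj} x_j* for q = p+1,…,n. -/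

import Mathlib

open MeasureTheory Filter Topology

noncomputable section

/-- A P-matrix: all principal minors are positive. -/
def IsPMatrix {m : ℕ} (B : Matrix (Fin m) (Fin m) ℝ) : Prop :=
  ∀ S : Finset (Fin m), S.Nonempty →
    0 < (B.submatrix (fun i : {y // y ∈ S} => (i : Fin m))
          (fun j : {y // y ∈ S} => (j : Fin m))).det

/-- A non-singular M-matrix: nonpositive off-diagonal entries and all principal
minors positive. -/
def IsNonsingularMMatrix {m : ℕ} (B : Matrix (Fin m) (Fin m) ℝ) : Prop :=
  (∀ i j, i ≠ j → B i j ≤ 0) ∧ IsPMatrix B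


/-- The `p×p` leading principal block `[δ_ij λ_i + a_ij]` (indices `1,…,p`). -/
def Mp (n p : ℕ) (hpn : p ≤ n) (lam : Fin n → ℝ) (a : Fin n → Fin n → ℝ) :
    Matrix (Fin p) (Fin p) ℝ :=
  Matrix.of fun i j =>
    (if i = j then lam (Fin.castLE hpn i) else 0) +
      a (Fin.castLE hpn i) (Fin.castLE hpn j)

/-- `R_0^p`: the determinant of the `p×p` leading principal block. -/
def R0p (n p : ℕ) (hpn : p ≤ n) (lam : Fin n → ℝ) (a : Fin n → Fin n → ℝ) : ℝ :=
  (Mp n p hpn lam a).det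

/-- `R_i^p`: the determinant of the `p×p` block with column `i` replaced by
`(b_1,…,b_p)`. -/
def Rip (n p : ℕ) (hpn : p ≤ n) (lam : Fin n → ℝ) (a : Fin n → Fin n → ℝ)
    (b : Fin n → ℝ) (i : Fin p) : ℝ :=
  ((Mp n p hpn lam a).updateCol i (fun k => b (Fin.castLE hpn k))).det

/-- The `(p+1)×(p+1)` matrix whose determinant is `R_q^{p+1,q}`. -/
def Rqmat (n p : ℕ) (hpn : p < n) (lam : Fin n → ℝ) (a : Fin n → Fin n → ℝ)
    (b : Fin n → ℝ) (q : Fin n) : Matrix (Fin (p + 1)) (Fin (p + 1)) ℝ :=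
  Matrix.of fun i j =>
    if hi : (i : ℕ) < p then
      if hj : (j : ℕ) < p then
        (if (i : ℕ) = (j : ℕ) then lam ⟨i, hi.trans hpn⟩ else 0) +
          a ⟨i, hi.trans hpn⟩ ⟨j, hj.trans hpn⟩
      else b ⟨i, hi.trans hpn⟩
    else
      if hj : (j : ℕ) < p then a q ⟨j, hj.trans hpn⟩ else b q

/-
With `x` supported on the first `p` coordinates, the first `p` equations read `M_p y = b_p` for the
leading block `M_p`, whose determinant `R_0^p` is a principal minor of a P-matrix, hence positive.
So `y = M_p⁻¹ b_p` is forced, and Cramer's rule gives `R_i^p = R_0^p y_i`. For `q > p` the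
`q`-th condition reads `b_q ≤ ∑_{j ≤ p} a_qj y_j`, and expanding the bordered determinant gives
`R_q^{p+1,q} = R_0^p (b_q - ∑_{j ≤ p} a_qj y_j)`. Both sign conditions are therefore exactly the
conditions on `y`.
-/

open Matrix Finset

namespace Matrix

variable {m R : Type*} [Fintype m] [DecidableEq m] [CommRing R]

theorem cramer_eq_det_smul_of_mulVec_eq {A : Matrix m m R} {x b : m → R} (h : A *ᵥ x = b) :
    cramer A b = A.det • x := by
  rw [cramer_eq_adjugate_mulVec, ← h, mulVec_mulVec, adjugate_mul, smul_mulVec, one_mulVec]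

/-- Subtracting the columns of `A` weighted by `x` from the last column clears `u`. -/
theorem det_fromBlocks_replicateCol_replicateRow {A : Matrix m m R} {x u : m → R}
    (hx : A *ᵥ x = u) (v : m → R) (d : R) :
    (fromBlocks A (replicateCol (Fin 1) u) (replicateRow (Fin 1) v) (of fun _ _ => d)).det =
      A.det * (d - v ⬝ᵥ x) := by
  have hfactor : fromBlocks A (replicateCol (Fin 1) u) (replicateRow (Fin 1) v) (of fun _ _ => d) =
      fromBlocks A 0 (replicateRow (Fin 1) v) (of fun _ _ => d - v ⬝ᵥ x) *
        fromBlocks 1 (replicateCol (Fin 1) x) 0 1 := by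
    rw [fromBlocks_multiply]
    congr 1
    · simp
    · ext i j; simp [← hx, mulVec, dotProduct, mul_apply]
    · simp
    · ext i j; simp [mul_apply, dotProduct]
  rw [hfactor, det_mul, det_fromBlocks_zero₁₂, det_fromBlocks_zero₂₁, det_fin_one]
  simp

end Matrix

namespace Fin

theorem sum_univ_eq_sum_castLE_of_eq_zero {M : Type*} [AddCommMonoid M] {n p : ℕ} (hpn : p ≤ n)
    {g : Fin n → M} (hg : ∀ i : Fin n, p ≤ (i : ℕ) → g i = 0) :
    ∑ i, g i = ∑ k : Fin p, g (Fin.castLE hpn k) :=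
  (Fintype.sum_of_injective _ (Fin.castLE_injective hpn) _ _
    (fun i hi => hg i (by by_contra h; exact hi ⟨⟨i, by omega⟩, rfl⟩)) fun _ => rfl).symm

theorem forall_lt_iff_forall_castLE {n p : ℕ} (hpn : p ≤ n) {P : Fin n → Prop} :
    (∀ i : Fin n, (i : ℕ) < p → P i) ↔ ∀ k : Fin p, P (Fin.castLE hpn k) :=
  ⟨fun h k => h _ k.isLt, fun h i hi => h ⟨i, hi⟩⟩

theorem extend_castLE_apply_of_le {n p : ℕ} (hpn : p ≤ n) {M : Type*} (r : Fin p → M)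
    (g : Fin n → M) {i : Fin n} (hi : p ≤ (i : ℕ)) :
    Function.extend (Fin.castLE hpn) r g i = g i :=
  Function.extend_apply' _ _ _ fun ⟨k, hk⟩ => by
    rw [← hk, Fin.val_castLE] at hi
    omega

end Fin

theorem IsPMatrix.det_submatrix_pos {m : ℕ} {B : Matrix (Fin m) (Fin m) ℝ} (hB : IsPMatrix B)
    {ι : Type*} [Fintype ι] [DecidableEq ι] {f : ι → Fin m} (hf : Function.Injective f) :
    0 < (B.submatrix f f).det := by
  rcases isEmpty_or_nonempty ι with _ | _
  · simp
  · let e : ι ≃ {y // y ∈ univ.image f} :=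
      (Equiv.ofInjective f hf).trans (Equiv.subtypeEquivRight fun y => by simp)
    have := hB _ (univ_nonempty.image f)
    rwa [← det_submatrix_equiv_self e] at this

section LeadingBlock

variable {n p : ℕ} (hpn : p ≤ n) (lam b : Fin n → ℝ) (a : Fin n → Fin n → ℝ)

theorem Mp_eq_submatrix :
    Mp n p hpn lam a = (Matrix.of fun i j : Fin n => (if i = j then lam i else 0) + a i j).submatrix
      (Fin.castLE hpn) (Fin.castLE hpn) := by
  ext i j
  simp [Mp, (Fin.castLE_injective hpn).eq_iff]

theorem R0p_pos
    (hP : IsPMatrix (Matrix.of fun i j : Fin n => (if i = j then lam i else 0) + a i j)) :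
    0 < R0p n p hpn lam a := by
  rw [R0p, Mp_eq_submatrix]
  exact hP.det_submatrix_pos (Fin.castLE_injective hpn)

theorem Mp_mulVec_apply (y : Fin p → ℝ) (k : Fin p) :
    (Mp n p hpn lam a *ᵥ y) k =
      lam (Fin.castLE hpn k) * y k + ∑ j, a (Fin.castLE hpn k) (Fin.castLE hpn j) * y j := by
  simp [Mp, mulVec, dotProduct, add_mul, Finset.sum_add_distrib, ite_mul]

/-- The vector `x*` of the paper, restricted to its first `p` coordinates. -/
def leadingSolution : Fin p → ℝ :=
  (Mp n p hpn lam a)⁻¹ *ᵥ fun k => b (Fin.castLE hpn k)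

variable {lam a}

theorem Mp_mulVec_leadingSolution (h : R0p n p hpn lam a ≠ 0) :
    Mp n p hpn lam a *ᵥ leadingSolution hpn lam b a = fun k => b (Fin.castLE hpn k) := by
  rw [leadingSolution, mulVec_mulVec, mul_nonsing_inv _ (Ne.isUnit h), one_mulVec]

theorem Mp_mulVec_eq_iff (h : R0p n p hpn lam a ≠ 0) (y : Fin p → ℝ) :
    Mp n p hpn lam a *ᵥ y = (fun k => b (Fin.castLE hpn k)) ↔
      y = leadingSolution hpn lam b a := by
  rw [← Mp_mulVec_leadingSolution hpn b h]
  exact (mulVec_injective_of_det_ne_zero h).eq_iff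

theorem Rip_eq_mul_leadingSolution (h : R0p n p hpn lam a ≠ 0) (i : Fin p) :
    Rip n p hpn lam a b i = R0p n p hpn lam a * leadingSolution hpn lam b a i := by
  rw [Rip, ← cramer_apply, cramer_eq_det_smul_of_mulVec_eq (Mp_mulVec_leadingSolution hpn b h)]
  rfl

end LeadingBlock

theorem det_Rqmat {n p : ℕ} (hpn : p < n) {lam : Fin n → ℝ} {a : Fin n → Fin n → ℝ}
    (b : Fin n → ℝ) (h : R0p n p hpn.le lam a ≠ 0) (q : Fin n) :
    (Rqmat n p hpn lam a b q).det = R0p n p hpn.le lam a *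
      (b q - ∑ j, a q (Fin.castLE hpn.le j) * leadingSolution hpn.le lam b a j) := by
  have hblocks : (Rqmat n p hpn lam a b q).submatrix finSumFinEquiv finSumFinEquiv =
      fromBlocks (Mp n p hpn.le lam a) (replicateCol (Fin 1) fun k => b (Fin.castLE hpn.le k))
        (replicateRow (Fin 1) fun k => a q (Fin.castLE hpn.le k)) (of fun _ _ => b q) := by
    ext (i | i) (j | j) <;> simp [Rqmat, Mp, Fin.castLE, Fin.val_inj]
  rw [← det_submatrix_equiv_self finSumFinEquiv, hblocks,
    det_fromBlocks_replicateCol_replicateRow (Mp_mulVec_leadingSolution hpn.le b h)]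
  rfl

def IsSaturatedEquilibrium {n : ℕ} (p : ℕ) (lam b : Fin n → ℝ) (a : Fin n → Fin n → ℝ)
    (xs : Fin n → ℝ) : Prop :=
  (∀ i : Fin n, (i : ℕ) < p → 0 < xs i) ∧
    (∀ i : Fin n, p ≤ (i : ℕ) → xs i = 0) ∧
    (∀ i : Fin n, (i : ℕ) < p → lam i * xs i + (∑ j, a i j * xs j) = b i) ∧
    (∀ q : Fin n, p ≤ (q : ℕ) → b q ≤ lam q * xs q + ∑ j, a q j * xs j)

section Equilibrium

variable {n p : ℕ} (hpn : p ≤ n) {lam b : Fin n → ℝ} {a : Fin n → Fin n → ℝ}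

theorem isSaturatedEquilibrium_extend_iff (r : Fin p → ℝ) :
    IsSaturatedEquilibrium p lam b a (Function.extend (Fin.castLE hpn) r 0) ↔
      (∀ k, 0 < r k) ∧ Mp n p hpn lam a *ᵥ r = (fun k => b (Fin.castLE hpn k)) ∧
        ∀ q : Fin n, p ≤ (q : ℕ) → b q ≤ ∑ j, a q (Fin.castLE hpn j) * r j := by
  have hzero (i : Fin n) (hi : p ≤ (i : ℕ)) : Function.extend (Fin.castLE hpn) r 0 i = 0 :=
    Fin.extend_castLE_apply_of_le hpn r 0 hi
  have hsum (i : Fin n) :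
      ∑ j, a i j * Function.extend (Fin.castLE hpn) r 0 j =
        ∑ j, a i (Fin.castLE hpn j) * r j := by
    rw [Fin.sum_univ_eq_sum_castLE_of_eq_zero hpn fun j hj => by rw [hzero j hj, mul_zero]]
    simp [(Fin.castLE_injective hpn).extend_apply]
  simp only [IsSaturatedEquilibrium, hsum, Fin.forall_lt_iff_forall_castLE hpn,
    (Fin.castLE_injective hpn).extend_apply, funext_iff, Mp_mulVec_apply]
  constructor
  · rintro ⟨hpos, -, heq, hge⟩
    exact ⟨hpos, heq, fun q hq => by simpa [hzero q hq] using hge q hq⟩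
  · rintro ⟨hpos, heq, hge⟩
    exact ⟨hpos, hzero, heq, fun q hq => by simpa [hzero q hq] using hge q hq⟩

theorem IsSaturatedEquilibrium.eq_extend {xs : Fin n → ℝ}
    (h : IsSaturatedEquilibrium p lam b a xs) :
    xs = Function.extend (Fin.castLE hpn) (fun k => xs (Fin.castLE hpn k)) (0 : Fin n → ℝ) := by
  funext i
  by_cases hi : (i : ℕ) < p
  · exact ((Fin.castLE_injective hpn).extend_apply (fun k => xs (Fin.castLE hpn k)) 0
      ⟨i, hi⟩).symm
  · rw [Fin.extend_castLE_apply_of_le hpn _ 0 (not_lt.1 hi), h.2.1 i (not_lt.1 hi), Pi.zero_apply]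

variable (b)

theorem isSaturatedEquilibrium_iff (h : R0p n p hpn lam a ≠ 0) (xs : Fin n → ℝ) :
    IsSaturatedEquilibrium p lam b a xs ↔
      xs = Function.extend (Fin.castLE hpn) (leadingSolution hpn lam b a) 0 ∧
        (∀ k, 0 < leadingSolution hpn lam b a k) ∧
        ∀ q : Fin n, p ≤ (q : ℕ) →
          b q ≤ ∑ j, a q (Fin.castLE hpn j) * leadingSolution hpn lam b a j := by
  constructor
  · intro hxs
    obtain ⟨r, rfl⟩ : ∃ r, xs = Function.extend (Fin.castLE hpn) r 0 :=
      ⟨_, hxs.eq_extend hpn⟩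
    rw [isSaturatedEquilibrium_extend_iff, Mp_mulVec_eq_iff hpn b h] at hxs
    obtain ⟨hpos, rfl, hge⟩ := hxs
    exact ⟨rfl, hpos, hge⟩
  · rintro ⟨rfl, hpos, hge⟩
    rw [isSaturatedEquilibrium_extend_iff, Mp_mulVec_eq_iff hpn b h]
    exact ⟨hpos, rfl, hge⟩

end Equilibrium

theorem statement17_general (n p : ℕ) (hpn : p < n)
    (lam b : Fin n → ℝ) (a : Fin n → Fin n → ℝ)
    (hP : IsPMatrix (Matrix.of fun i j : Fin n =>
      (if i = j then lam i else 0) + a i j)) :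
    ((∃ xs : Fin n → ℝ, (∀ i : Fin n, (i : ℕ) < p → 0 < xs i) ∧
        (∀ i : Fin n, p ≤ (i : ℕ) → xs i = 0) ∧
        (∀ i : Fin n, (i : ℕ) < p →
          lam i * xs i + (∑ j, a i j * xs j) = b i) ∧
        (∀ q : Fin n, p ≤ (q : ℕ) →
          b q ≤ lam q * xs q + ∑ j, a q j * xs j)) ↔
      ((∀ i : Fin p, 0 < Rip n p hpn.le lam a b i) ∧
        ∀ q : Fin n, p ≤ (q : ℕ) → (Rqmat n p hpn lam a b q).det ≤ 0)) ∧
    (∀ xs : Fin n → ℝ, (∀ i : Fin n, (i : ℕ) < p → 0 < xs i) →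
      (∀ i : Fin n, p ≤ (i : ℕ) → xs i = 0) →
      (∀ i : Fin n, (i : ℕ) < p →
        lam i * xs i + (∑ j, a i j * xs j) = b i) →
      (∀ q : Fin n, p ≤ (q : ℕ) →
        b q ≤ lam q * xs q + ∑ j, a q j * xs j) →
      (∀ i : Fin p, xs (Fin.castLE hpn.le i) =
          Rip n p hpn.le lam a b i / R0p n p hpn.le lam a) ∧
      (∀ q : Fin n, p ≤ (q : ℕ) →
        b q ≤ ∑ j : Fin p, a q (Fin.castLE hpn.le j) * xs (Fin.castLE hpn.le j))) := by
  have hR0 : 0 < R0p n p hpn.le lam a := R0p_pos hpn.le lam a hP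
  have hequil := isSaturatedEquilibrium_iff hpn.le b hR0.ne'
  have hRip := Rip_eq_mul_leadingSolution hpn.le b hR0.ne'
  have hsign (x : ℝ) : R0p n p hpn.le lam a * x ≤ 0 ↔ x ≤ 0 := by
    rw [← smul_eq_mul]
    exact smul_nonpos_iff_nonpos_of_pos_left hR0
  refine ⟨?_, fun xs hpos hzero heq hge => ?_⟩
  · change (∃ xs, IsSaturatedEquilibrium p lam b a xs) ↔ _
    simp only [hequil, exists_eq_left, hRip, det_Rqmat hpn b hR0.ne', mul_pos_iff_of_pos_left hR0,
      hsign, sub_nonpos]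
  · obtain ⟨rfl, -, hge'⟩ := (hequil xs).1 ⟨hpos, hzero, heq, hge⟩
    simp only [(Fin.castLE_injective hpn.le).extend_apply]
    exact ⟨fun i => by rw [hRip, mul_div_cancel_left₀ _ hR0.ne'], hge'⟩

theorem statement17 (n p : ℕ) (hp1 : 1 ≤ p) (hpn : p < n)
    (lam b : Fin n → ℝ) (a : Fin n → Fin n → ℝ)
    (hP : IsPMatrix (Matrix.of fun i j : Fin n =>
      (if i = j then lam i else 0) + a i j)) :
    ((∃ xs : Fin n → ℝ, (∀ i : Fin n, (i : ℕ) < p → 0 < xs i) ∧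
        (∀ i : Fin n, p ≤ (i : ℕ) → xs i = 0) ∧
        (∀ i : Fin n, (i : ℕ) < p →
          lam i * xs i + (∑ j, a i j * xs j) = b i) ∧
        (∀ q : Fin n, p ≤ (q : ℕ) →
          b q ≤ lam q * xs q + ∑ j, a q j * xs j)) ↔
      ((∀ i : Fin p, 0 < Rip n p hpn.le lam a b i) ∧
        ∀ q : Fin n, p ≤ (q : ℕ) → (Rqmat n p hpn lam a b q).det ≤ 0)) ∧
    (∀ xs : Fin n → ℝ, (∀ i : Fin n, (i : ℕ) < p → 0 < xs i) →
      (∀ i : Fin n, p ≤ (i : ℕ) → xs i = 0) →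
      (∀ i : Fin n, (i : ℕ) < p →
        lam i * xs i + (∑ j, a i j * xs j) = b i) →
      (∀ q : Fin n, p ≤ (q : ℕ) →
        b q ≤ lam q * xs q + ∑ j, a q j * xs j) →
      (∀ i : Fin p, xs (Fin.castLE hpn.le i) =
          Rip n p hpn.le lam a b i / R0p n p hpn.le lam a) ∧
      (∀ q : Fin n, p ≤ (q : ℕ) →
        b q ≤ ∑ j : Fin p, a q (Fin.castLE hpn.le j) * xs (Fin.castLE hpn.le j))) :=
  statement17_general n p hpn lam b a hP
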